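/- Let (V,d,b) be an acyclic information network, let v be a non-void node and 1 ≤ t ≤ T. Then for all A ⊆ B ⊆ V\{d}, Â ⊆ B̂ ⊆ V\{d}, and w ∈ (V\{d}) \ (B ∪ B̂): (1) E[X^t_v(A∪{w}, Â)] − E[X^t_v(A, Â)] ≥ E[X^t_v(B∪{w}, B̂)] − E[X^t_v(B, B̂)]; (2) E[X^t_v(A, Â∪{w})] − E[X^t_v(A, Â)] ≥ E[X^t_v(B, B̂∪{w})] − E[X^t_v(B, B̂)]; and (3) E[X^t_v(A, Â)] ≤ E[X^t_v(B, B̂)] (monotonicity). -/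
import Mathlib


open MeasureTheory

/-- An information network: a finite node set `V` with a distinguished void node `d`
and a row-stochastic weight matrix `b` with entries in `[0,1]` and `b d d = 1`. -/
structure InfoNetwork (V : Type*) [Fintype V] where
  d : V
  b : V → V → ℝ
  b_nonneg : ∀ v u, 0 ≤ b v u
  b_le_one : ∀ v u, b v u ≤ 1
  row_sum : ∀ v, ∑ u, b v u = 1
  void_loop : b d d = 1

/-- The uniform probability measure on the interval `(0,1)`. -/
noncomputable def unifMeasure : Measure ℝ := volume.restrict (Set.Ioo (0:ℝ) 1)

/-- Product over `V` of uniform measures on `(0,1)`: the distribution of the thresholds. -/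
noncomputable def thresholdMeasure (V : Type*) [Fintype V] : Measure (V → ℝ) :=
  Measure.pi fun _ : V => unifMeasure

namespace InfoNetwork

variable {V : Type*} [Fintype V]

/-- The set of active nodes at time `t` under the non-progressive linear threshold model,
with transient initial set `A`, permanent initial set `Ahat` and thresholds `θ`. -/
noncomputable def activeSet (N : InfoNetwork V) (A Ahat : Set V) (θ : V → ℝ) : ℕ → Set V
  | 0 => A ∪ Ahat
  | t+1 => Ahat ∪
      {v | v ∉ Ahat ∧ θ v ≤ ∑ u, (N.activeSet A Ahat θ t).indicator (N.b v) u}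

/-- `E[X^t_v(A,Ahat)]`: the probability (over the random thresholds) that `v` is active
at time `t`. -/
noncomputable def EX (N : InfoNetwork V) (A Ahat : Set V) (t : ℕ) (v : V) : ℝ :=
  (thresholdMeasure V {θ | v ∈ N.activeSet A Ahat θ t}).toReal

/-- The expected influence over the period `[1,T]`. -/
noncomputable def sigmaBar (N : InfoNetwork V) (T : ℕ) (A Ahat : Set V) : ℝ :=
  (1 / (T : ℝ)) * ∑ t ∈ Finset.Icc 1 T, ∑ v, N.EX A Ahat t v

/-- The edge relation of the directed graph on `V \ {d}`. -/
def edgeRel (N : InfoNetwork V) (v u : V) : Prop :=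
  v ≠ N.d ∧ u ≠ N.d ∧ 0 < N.b v u

/-- The network is acyclic if the directed graph on `V \ {d}` has no directed cycle. -/
def Acyclic (N : InfoNetwork V) : Prop :=
  ∀ v, ¬ Relation.TransGen N.edgeRel v v

end InfoNetwork

/-- A real-valued set function `f` is submodular on the ground set `S`. -/
def SubmodularOn {V : Type*} (S : Set V) (f : Set V → ℝ) : Prop :=
  ∀ A B : Set V, A ⊆ B → B ⊆ S → ∀ w ∈ S, w ∉ B →
    f (insert w B) - f B ≤ f (insert w A) - f A

section Aux

open MeasureTheory Set

instance : IsProbabilityMeasure unifMeasure :=  by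
  constructor
  rw [unifMeasure, Measure.restrict_apply_univ, Real.volume_Ioo]
  norm_num

instance (V : Type*) [Fintype V] : IsProbabilityMeasure (thresholdMeasure V) := by
  unfold thresholdMeasure; infer_instance

lemma unifMeasure_Iic {s : ℝ} (h0 : 0 ≤ s) (h1 : s ≤ 1) :
    unifMeasure (Set.Iic s) = ENNReal.ofReal s := by
  rw [unifMeasure, Measure.restrict_apply measurableSet_Iic]
  rcases eq_or_lt_of_le h1 with h | h
  · have : Set.Iic s ∩ Set.Ioo (0:ℝ) 1 = Set.Ioo 0 1 := by
      apply Set.inter_eq_self_of_subset_right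
      intro x hx; exact le_of_lt (lt_of_lt_of_le hx.2 (le_of_eq h.symm))
    rw [this, Real.volume_Ioo, h]; norm_num
  · have : Set.Iic s ∩ Set.Ioo (0:ℝ) 1 = Set.Ioc 0 s := by
      ext x
      simp only [Set.mem_inter_iff, Set.mem_Iic, Set.mem_Ioo, Set.mem_Ioc]
      constructor
      · rintro ⟨h1, h2, h3⟩; exact ⟨h2, h1⟩
      · rintro ⟨h2, h1⟩; exact ⟨h1, h2, lt_of_le_of_lt h1 h⟩
    rw [this, Real.volume_Ioc]; norm_num

namespace InfoNetwork

variable {V : Type*} [Fintype V] (N : InfoNetwork V)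

lemma b_void {u : V} (hu : u ≠ N.d) : N.b N.d u = 0 := by
  classical
  have hsum : ∑ x ∈ Finset.univ.erase N.d, N.b N.d x = 0 := by
    have := N.row_sum N.d
    have h2 : ∑ x ∈ Finset.univ.erase N.d, N.b N.d x + N.b N.d N.d = 1 := by
      rw [Finset.sum_erase_add _ _ (Finset.mem_univ _)]; exact this
    rw [N.void_loop] at h2; linarith
  have := (Finset.sum_eq_zero_iff_of_nonneg (fun x _ => N.b_nonneg N.d x)).mp hsum
  exact this u (Finset.mem_erase.mpr ⟨hu, Finset.mem_univ u⟩)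

/-- Measurability of the activation events. -/
lemma measurableSet_activeSet (A Ahat : Set V) :
    ∀ (t : ℕ) (u : V), MeasurableSet {θ : V → ℝ | u ∈ N.activeSet A Ahat θ t} := by
  intro t
  induction t with
  | zero =>
    intro u
    by_cases h : u ∈ A ∪ Ahat <;> simp [activeSet, h]
  | succ t ih =>
    intro u
    by_cases h : u ∈ Ahat
    · simp [activeSet, h]
    · have hset : {θ : V → ℝ | u ∈ N.activeSet A Ahat θ (t+1)} =
          {θ : V → ℝ | θ u ≤ ∑ x, (N.activeSet A Ahat θ t).indicator (N.b u) x} := by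
        ext θ; simp [activeSet, h]
      rw [hset]
      have hS : Measurable fun θ : V → ℝ =>
          ∑ x, (N.activeSet A Ahat θ t).indicator (N.b u) x := by
        apply Finset.measurable_sum
        intro x _
        have : (fun θ : V → ℝ => (N.activeSet A Ahat θ t).indicator (N.b u) x) =
            Set.indicator {θ : V → ℝ | x ∈ N.activeSet A Ahat θ t} (fun _ => N.b u x) := by
          ext θ
          by_cases hx : x ∈ N.activeSet A Ahat θ t <;>
            simp [Set.indicator_apply, hx]
        rw [this]
        exact Measurable.indicator measurable_const (ih x)
      exact measurableSet_le (measurable_pi_apply u) hS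

/-- Reachability along nonzero weights. -/
def reaches (u x : V) : Prop := Relation.ReflTransGen (fun a c => N.b a c ≠ 0) u x

lemma reaches_void {x : V} (h : N.reaches N.d x) : x = N.d := by
  induction h with
  | refl => rfl
  | @tail b c _ hbc ih =>
    subst ih
    by_contra hne
    exact hbc (N.b_void hne)

/-- Activation only depends on thresholds of reachable nodes. -/
lemma mem_activeSet_congr (A Ahat : Set V) :
    ∀ (t : ℕ) (u : V) (θ₁ θ₂ : V → ℝ), (∀ x, N.reaches u x → θ₁ x = θ₂ x) →
      (u ∈ N.activeSet A Ahat θ₁ t ↔ u ∈ N.activeSet A Ahat θ₂ t) := by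
  classical
  intro t
  induction t with
  | zero => intro u θ₁ θ₂ _; simp [activeSet]
  | succ t ih =>
    intro u θ₁ θ₂ h
    by_cases hu : u ∈ Ahat
    · simp [activeSet, hu]
    · have hθ : θ₁ u = θ₂ u := h u Relation.ReflTransGen.refl
      have hsum : ∑ x, (N.activeSet A Ahat θ₁ t).indicator (N.b u) x =
          ∑ x, (N.activeSet A Ahat θ₂ t).indicator (N.b u) x := by
        apply Finset.sum_congr rfl
        intro x _
        by_cases hbx : N.b u x = 0
        · rw [Set.indicator_apply, Set.indicator_apply, hbx]
          simp
        · have hiff := ih x θ₁ θ₂ (fun y hy => h y (Relation.ReflTransGen.head hbx hy))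
          by_cases hx : x ∈ N.activeSet A Ahat θ₁ t
          · rw [Set.indicator_of_mem hx, Set.indicator_of_mem (hiff.mp hx)]
          · rw [Set.indicator_of_notMem hx,
              Set.indicator_of_notMem (fun hh => hx (hiff.mpr hh))]
      simp only [activeSet, Set.mem_union, Set.mem_setOf_eq]
      rw [hθ, hsum]

lemma void_notMem_activeSet {A Ahat : Set V} (hA : N.d ∉ A) (hAhat : N.d ∉ Ahat)
    {θ : V → ℝ} (hθ : 0 < θ N.d) : ∀ t, N.d ∉ N.activeSet A Ahat θ t := by
  intro t
  induction t with
  | zero => simp [activeSet, hA, hAhat]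
  | succ t ih =>
    intro hmem
    simp only [activeSet, Set.mem_union, Set.mem_setOf_eq] at hmem
    rcases hmem with h | ⟨_, h⟩
    · exact hAhat h
    · have hz : ∑ x, (N.activeSet A Ahat θ t).indicator (N.b N.d) x = 0 := by
        apply Finset.sum_eq_zero
        intro x _
        by_cases hx : x = N.d
        · subst hx; exact Set.indicator_of_notMem ih _
        · simp [Set.indicator_apply, N.b_void hx]
      rw [hz] at h
      exact absurd h (not_le.mpr hθ)

lemma transGen_of_reaches {u x : V} (hu : u ≠ N.d) (hx : x ≠ N.d) (h : N.reaches u x) :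
    u = x ∨ Relation.TransGen N.edgeRel u x := by
  induction h using Relation.ReflTransGen.head_induction_on with
  | refl => exact Or.inl rfl
  | @head a c hbc hrest ih =>
    have hc : c ≠ N.d := by
      intro hcd; subst hcd
      exact hx (N.reaches_void hrest)
    have hedge : N.edgeRel a c := ⟨hu, hc, lt_of_le_of_ne (N.b_nonneg a c) (Ne.symm hbc)⟩
    rcases ih hc with rfl | htr
    · exact Or.inr (Relation.TransGen.single hedge)
    · exact Or.inr (Relation.TransGen.head hedge htr)

/-- In an acyclic network, for `v ≠ d`, an out-neighbour of `v` cannot reach `v`. -/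
lemma not_reaches_back (hacyc : N.Acyclic) {v u : V} (hv : v ≠ N.d)
    (hbu : N.b v u ≠ 0) : ¬ N.reaches u v := by
  intro hr
  by_cases hu : u = N.d
  · subst hu; exact hv (N.reaches_void hr)
  · have hedge : N.edgeRel v u := ⟨hv, hu, lt_of_le_of_ne (N.b_nonneg v u) (Ne.symm hbu)⟩
    rcases N.transGen_of_reaches hu hv hr with heq | htr
    · subst heq; exact hacyc _ (Relation.TransGen.single hedge)
    · exact hacyc _ (Relation.TransGen.head hedge htr)

/-- Key Fubini-type computation: the probability that a coordinate `v` lies below a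
`[0,1]`-valued function not depending on coordinate `v` equals its expectation. -/
lemma measure_threshold_le [DecidableEq V] (S : (V → ℝ) → ℝ) (v : V) (hSmeas : Measurable S)
    (hS0 : ∀ θ, 0 ≤ S θ) (hS1 : ∀ θ, S θ ≤ 1)
    (hSupd : ∀ (θ : V → ℝ) (r : ℝ), S (Function.update θ v r) = S θ) :
    thresholdMeasure V {θ : V → ℝ | θ v ≤ S θ} =
      ∫⁻ θ, ENNReal.ofReal (S θ) ∂thresholdMeasure V := by
  classical
  have hEmeas : MeasurableSet {θ : V → ℝ | θ v ≤ S θ} :=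
    measurableSet_le (measurable_pi_apply v) hSmeas
  set f : (V → ℝ) → ENNReal := Set.indicator {θ : V → ℝ | θ v ≤ S θ} 1 with hfdef
  have hfmeas : Measurable f := measurable_one.indicator hEmeas
  set g : (V → ℝ) → ENNReal := fun θ => ENNReal.ofReal (S θ) with hgdef
  have hgmeas : Measurable g := ENNReal.measurable_ofReal.comp hSmeas
  have key : ∀ θ : V → ℝ, (∫⁻ r, f (Function.update θ v r) ∂unifMeasure) = g θ := by
    intro θ
    have hind : (fun r => f (Function.update θ v r)) = Set.indicator (Set.Iic (S θ)) 1 := by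
      funext r
      have hmem : Function.update θ v r ∈ {θ : V → ℝ | θ v ≤ S θ} ↔ r ∈ Set.Iic (S θ) := by
        simp only [Set.mem_setOf_eq, Function.update_self, Set.mem_Iic, hSupd]
      by_cases hr : r ∈ Set.Iic (S θ)
      · rw [hfdef, Set.indicator_of_mem (hmem.mpr hr), Set.indicator_of_mem hr]
        rfl
      · rw [hfdef, Set.indicator_of_notMem (fun hh => hr (hmem.mp hh)),
          Set.indicator_of_notMem hr]
    rw [hind, lintegral_indicator_one measurableSet_Iic, unifMeasure_Iic (hS0 θ) (hS1 θ)]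
  have key2 : ∀ θ : V → ℝ, (∫⁻ r, g (Function.update θ v r) ∂unifMeasure) = g θ := by
    intro θ
    have : (fun r => g (Function.update θ v r)) = fun _ => g θ := by
      funext r
      rw [hgdef]
      simp only
      rw [hSupd]
    rw [this, lintegral_const, measure_univ, mul_one]
  rw [← lintegral_indicator_one hEmeas]
  show (∫⁻ θ, f θ ∂(Measure.pi fun _ : V => unifMeasure)) =
    ∫⁻ θ, g θ ∂(Measure.pi fun _ : V => unifMeasure)
  rw [lintegral_eq_lmarginal_univ (fun _ => (0:ℝ)),
    lintegral_eq_lmarginal_univ (fun _ => (0:ℝ)),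
    lmarginal_erase' _ hfmeas (Finset.mem_univ v),
    lmarginal_erase' _ hgmeas (Finset.mem_univ v)]
  have h1 : (fun x : V → ℝ => ∫⁻ r, f (Function.update x v r) ∂unifMeasure) = g :=
    funext key
  have h2 : (fun x : V → ℝ => ∫⁻ r, g (Function.update x v r) ∂unifMeasure) = g :=
    funext key2
  rw [h1, h2]

/-- The fundamental recursion for activation probabilities in an acyclic network. -/
lemma measure_activeSet_succ (hacyc : N.Acyclic) {A Ahat : Set V} {v : V}
    (hv : v ≠ N.d) (hvA : v ∉ Ahat) (t : ℕ) :
    thresholdMeasure V {θ : V → ℝ | v ∈ N.activeSet A Ahat θ (t+1)} =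
      ∑ u, ENNReal.ofReal (N.b v u) *
        thresholdMeasure V {θ : V → ℝ | u ∈ N.activeSet A Ahat θ t} := by
  classical
  have hS0 : ∀ θ : V → ℝ, 0 ≤ ∑ u, (N.activeSet A Ahat θ t).indicator (N.b v) u :=
    fun θ => Finset.sum_nonneg fun x _ =>
      Set.indicator_apply_nonneg fun _ => N.b_nonneg v x
  have hS1 : ∀ θ : V → ℝ, (∑ u, (N.activeSet A Ahat θ t).indicator (N.b v) u) ≤ 1 := by
    intro θ
    calc (∑ u, (N.activeSet A Ahat θ t).indicator (N.b v) u) ≤ ∑ u, N.b v u := by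
          apply Finset.sum_le_sum
          intro x _
          by_cases hx : x ∈ N.activeSet A Ahat θ t
          · rw [Set.indicator_of_mem hx]
          · rw [Set.indicator_of_notMem hx]; exact N.b_nonneg v x
      _ = 1 := N.row_sum v
  have hSmeas : Measurable fun θ : V → ℝ =>
      ∑ u, (N.activeSet A Ahat θ t).indicator (N.b v) u := by
    apply Finset.measurable_sum
    intro x _
    have : (fun θ : V → ℝ => (N.activeSet A Ahat θ t).indicator (N.b v) x) =
        Set.indicator {θ : V → ℝ | x ∈ N.activeSet A Ahat θ t} (fun _ => N.b v x) := by
      funext θ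
      by_cases hx : x ∈ N.activeSet A Ahat θ t
      · rw [Set.indicator_of_mem hx,
          Set.indicator_of_mem (show θ ∈ {θ : V → ℝ | x ∈ N.activeSet A Ahat θ t} from hx)]
      · rw [Set.indicator_of_notMem hx,
          Set.indicator_of_notMem (show θ ∉ {θ : V → ℝ | x ∈ N.activeSet A Ahat θ t} from hx)]
    rw [this]
    exact Measurable.indicator measurable_const (N.measurableSet_activeSet A Ahat t x)
  have hSupd : ∀ (θ : V → ℝ) (r : ℝ),
      (∑ u, (N.activeSet A Ahat (Function.update θ v r) t).indicator (N.b v) u) =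
        ∑ u, (N.activeSet A Ahat θ t).indicator (N.b v) u := by
    intro θ r
    apply Finset.sum_congr rfl
    intro x _
    by_cases hbx : N.b v x = 0
    · rw [Set.indicator_apply, Set.indicator_apply, hbx]
      simp
    · have hagree : ∀ y, N.reaches x y → (Function.update θ v r) y = θ y := by
        intro y hy
        have hyv : y ≠ v := fun h => N.not_reaches_back hacyc hv hbx (h ▸ hy)
        simp [Function.update_apply, hyv]
      have hiff := N.mem_activeSet_congr A Ahat t x (Function.update θ v r) θ hagree
      by_cases hx : x ∈ N.activeSet A Ahat (Function.update θ v r) t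
      · rw [Set.indicator_of_mem hx, Set.indicator_of_mem (hiff.mp hx)]
      · rw [Set.indicator_of_notMem hx,
          Set.indicator_of_notMem (fun hh => hx (hiff.mpr hh))]
  have hE : {θ : V → ℝ | v ∈ N.activeSet A Ahat θ (t+1)} =
      {θ : V → ℝ | θ v ≤ ∑ u, (N.activeSet A Ahat θ t).indicator (N.b v) u} := by
    ext θ
    simp [activeSet, hvA]
  rw [hE, measure_threshold_le _ v hSmeas hS0 hS1 hSupd]
  have hg' : ∀ θ : V → ℝ,
      ENNReal.ofReal (∑ u, (N.activeSet A Ahat θ t).indicator (N.b v) u) =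
        ∑ u, ENNReal.ofReal (N.b v u) *
          Set.indicator {θ : V → ℝ | u ∈ N.activeSet A Ahat θ t} 1 θ := by
    intro θ
    rw [ENNReal.ofReal_sum_of_nonneg
      (fun x _ => Set.indicator_apply_nonneg fun _ => N.b_nonneg v x)]
    apply Finset.sum_congr rfl
    intro x _
    by_cases hx : x ∈ N.activeSet A Ahat θ t
    · rw [Set.indicator_of_mem hx,
        Set.indicator_of_mem (show θ ∈ {θ : V → ℝ | x ∈ N.activeSet A Ahat θ t} from hx),
        Pi.one_apply, mul_one]
    · rw [Set.indicator_of_notMem hx,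
        Set.indicator_of_notMem
          (show θ ∉ {θ : V → ℝ | x ∈ N.activeSet A Ahat θ t} from hx),
        mul_zero, ENNReal.ofReal_zero]
  simp_rw [hg']
  rw [lintegral_finset_sum _ (fun x _ =>
    (measurable_one.indicator (N.measurableSet_activeSet A Ahat t x)).const_mul _)]
  apply Finset.sum_congr rfl
  intro x _
  rw [lintegral_const_mul' _ _ ENNReal.ofReal_ne_top,
    lintegral_indicator_one (N.measurableSet_activeSet A Ahat t x)]

lemma EX_zero_of_mem {A Ahat : Set V} {v : V} (h : v ∈ A ∪ Ahat) :
    N.EX A Ahat 0 v = 1 := by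
  rw [EX]
  have hs : {θ : V → ℝ | v ∈ N.activeSet A Ahat θ 0} = Set.univ := by
    ext θ; simp [activeSet, h]
  rw [hs, measure_univ]
  simp

lemma EX_zero_of_notMem {A Ahat : Set V} {v : V} (h : v ∉ A ∪ Ahat) :
    N.EX A Ahat 0 v = 0 := by
  rw [EX]
  have hs : {θ : V → ℝ | v ∈ N.activeSet A Ahat θ 0} = ∅ := by
    ext θ
    simp only [activeSet, Set.mem_union, Set.mem_setOf_eq, Set.mem_empty_iff_false, iff_false]
    exact h
  rw [hs, measure_empty]
  simp

lemma EX_succ_of_mem {A Ahat : Set V} {v : V} (h : v ∈ Ahat) (t : ℕ) :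
    N.EX A Ahat (t+1) v = 1 := by
  rw [EX]
  have hs : {θ : V → ℝ | v ∈ N.activeSet A Ahat θ (t+1)} = Set.univ := by
    ext θ; simp [activeSet, h]
  rw [hs, measure_univ]
  simp

lemma EX_succ (hacyc : N.Acyclic) {A Ahat : Set V} {v : V}
    (hv : v ≠ N.d) (hvA : v ∉ Ahat) (t : ℕ) :
    N.EX A Ahat (t+1) v = ∑ u, N.b v u * N.EX A Ahat t u := by
  rw [EX, measure_activeSet_succ N hacyc hv hvA t,
    ENNReal.toReal_sum (fun x _ =>
      ENNReal.mul_ne_top ENNReal.ofReal_ne_top (measure_ne_top _ _))]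
  apply Finset.sum_congr rfl
  intro x _
  rw [ENNReal.toReal_mul, ENNReal.toReal_ofReal (N.b_nonneg v x)]
  rfl

lemma EX_void {A Ahat : Set V} (hA : N.d ∉ A) (hAhat : N.d ∉ Ahat) (t : ℕ) :
    N.EX A Ahat t N.d = 0 := by
  rw [EX]
  have hsub : {θ : V → ℝ | N.d ∈ N.activeSet A Ahat θ t} ⊆
      (Function.eval N.d) ⁻¹' (Set.Iic (0:ℝ)) := by
    intro θ hθ
    simp only [Set.mem_preimage, Set.mem_Iic, Function.eval]
    by_contra hpos
    push_neg at hpos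
    exact N.void_notMem_activeSet hA hAhat hpos t hθ
  have h0 : thresholdMeasure V ((Function.eval N.d) ⁻¹' (Set.Iic (0:ℝ))) = 0 := by
    apply Measure.pi_eval_preimage_null
    rw [unifMeasure, Measure.restrict_apply measurableSet_Iic]
    have hint : Set.Iic (0:ℝ) ∩ Set.Ioo 0 1 = ∅ := by
      ext x
      simp only [Set.mem_inter_iff, Set.mem_Iic, Set.mem_Ioo, Set.mem_empty_iff_false,
        iff_false, not_and]
      intro h1 h2
      intro
      linarith
    rw [hint, measure_empty]
  rw [measure_mono_null hsub h0]
  simp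

open Classical in
/-- The deterministic recursion computing activation probabilities. -/
noncomputable def eFun (A Ahat : Set V) : ℕ → V → ℝ
  | 0 => fun v => if v ∈ A ∪ Ahat then 1 else 0
  | (t+1) => fun v => if v ∈ Ahat then 1 else ∑ u, N.b v u * eFun A Ahat t u

lemma eFun_zero_of_mem {A Ahat : Set V} {v : V} (h : v ∈ A ∪ Ahat) :
    N.eFun A Ahat 0 v = 1 := by simp [eFun, h]

lemma eFun_zero_of_notMem {A Ahat : Set V} {v : V} (h : v ∉ A ∪ Ahat) :
    N.eFun A Ahat 0 v = 0 := by simp [eFun, h]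

lemma eFun_succ_of_mem {A Ahat : Set V} {v : V} (h : v ∈ Ahat) (t : ℕ) :
    N.eFun A Ahat (t+1) v = 1 := by simp [eFun, h]

lemma eFun_succ_of_notMem {A Ahat : Set V} {v : V} (h : v ∉ Ahat) (t : ℕ) :
    N.eFun A Ahat (t+1) v = ∑ u, N.b v u * N.eFun A Ahat t u := by simp [eFun, h]

lemma eFun_bounds (A Ahat : Set V) :
    ∀ (t : ℕ) (v : V), 0 ≤ N.eFun A Ahat t v ∧ N.eFun A Ahat t v ≤ 1 := by
  intro t
  induction t with
  | zero =>
    intro v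
    by_cases h : v ∈ A ∪ Ahat
    · rw [N.eFun_zero_of_mem h]; norm_num
    · rw [N.eFun_zero_of_notMem h]; norm_num
  | succ t ih =>
    intro v
    by_cases h : v ∈ Ahat
    · rw [N.eFun_succ_of_mem h]; norm_num
    · rw [N.eFun_succ_of_notMem h]
      constructor
      · exact Finset.sum_nonneg fun x _ => mul_nonneg (N.b_nonneg v x) (ih x).1
      · calc (∑ u, N.b v u * N.eFun A Ahat t u) ≤ ∑ u, N.b v u := by
              apply Finset.sum_le_sum
              intro x _
              exact mul_le_of_le_one_right (N.b_nonneg v x) (ih x).2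
          _ = 1 := N.row_sum v

lemma eFun_void {A Ahat : Set V} (hA : N.d ∉ A) (hAhat : N.d ∉ Ahat) :
    ∀ t : ℕ, N.eFun A Ahat t N.d = 0 := by
  intro t
  induction t with
  | zero =>
    apply N.eFun_zero_of_notMem
    rintro (h | h)
    exacts [hA h, hAhat h]
  | succ t ih =>
    rw [N.eFun_succ_of_notMem hAhat]
    apply Finset.sum_eq_zero
    intro x _
    by_cases hx : x = N.d
    · subst hx; rw [ih, mul_zero]
    · rw [N.b_void hx, zero_mul]

lemma eFun_mono {A B Ahat Bhat : Set V} (hAB : A ⊆ B) (hhat : Ahat ⊆ Bhat) :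
    ∀ (t : ℕ) (v : V), N.eFun A Ahat t v ≤ N.eFun B Bhat t v := by
  intro t
  induction t with
  | zero =>
    intro v
    by_cases h : v ∈ A ∪ Ahat
    · rw [N.eFun_zero_of_mem h,
        N.eFun_zero_of_mem (h.elim (fun hh => Or.inl (hAB hh)) fun hh => Or.inr (hhat hh))]
    · rw [N.eFun_zero_of_notMem h]
      exact (N.eFun_bounds B Bhat 0 v).1
  | succ t ih =>
    intro v
    by_cases hB : v ∈ Bhat
    · rw [N.eFun_succ_of_mem hB]
      exact (N.eFun_bounds A Ahat (t+1) v).2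
    · have hA : v ∉ Ahat := fun hh => hB (hhat hh)
      rw [N.eFun_succ_of_notMem hA, N.eFun_succ_of_notMem hB]
      exact Finset.sum_le_sum fun x _ => mul_le_mul_of_nonneg_left (ih x) (N.b_nonneg v x)

lemma eFun_submod_trans {A B Ahat Bhat : Set V} {w : V}
    (hAB : A ⊆ B) (hhat : Ahat ⊆ Bhat) (hwB : w ∉ B ∪ Bhat) :
    ∀ (t : ℕ) (v : V),
      N.eFun (insert w B) Bhat t v - N.eFun B Bhat t v ≤
        N.eFun (insert w A) Ahat t v - N.eFun A Ahat t v := by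
  have hwA : w ∉ A ∪ Ahat := fun h =>
    hwB (h.elim (fun h => Or.inl (hAB h)) fun h => Or.inr (hhat h))
  intro t
  induction t with
  | zero =>
    intro v
    have hRHS : 0 ≤ N.eFun (insert w A) Ahat 0 v - N.eFun A Ahat 0 v := by
      have := N.eFun_mono (Set.subset_insert w A) (Set.Subset.refl Ahat) 0 v
      linarith
    by_cases hvw : v = w
    · subst hvw
      rw [N.eFun_zero_of_mem (Or.inl (Set.mem_insert _ _)),
        N.eFun_zero_of_notMem hwB,
        N.eFun_zero_of_mem (Or.inl (Set.mem_insert _ _)),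
        N.eFun_zero_of_notMem hwA]
    · by_cases hb : v ∈ B ∪ Bhat
      · have hb' : v ∈ insert w B ∪ Bhat :=
          hb.elim (fun h => Or.inl (Set.mem_insert_of_mem _ h)) Or.inr
        rw [N.eFun_zero_of_mem hb', N.eFun_zero_of_mem hb]
        linarith
      · have hb' : v ∉ insert w B ∪ Bhat := by
          rintro (h | h)
          · rcases Set.mem_insert_iff.mp h with rfl | h
            · exact hvw rfl
            · exact hb (Or.inl h)
          · exact hb (Or.inr h)
        rw [N.eFun_zero_of_notMem hb', N.eFun_zero_of_notMem hb]
        linarith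
  | succ t ih =>
    intro v
    by_cases hB : v ∈ Bhat
    · rw [N.eFun_succ_of_mem hB, N.eFun_succ_of_mem hB, sub_self]
      have := N.eFun_mono (Set.subset_insert w A) (Set.Subset.refl Ahat) (t+1) v
      linarith
    · have hA : v ∉ Ahat := fun hh => hB (hhat hh)
      rw [N.eFun_succ_of_notMem hB, N.eFun_succ_of_notMem hB,
        N.eFun_succ_of_notMem hA, N.eFun_succ_of_notMem hA,
        ← Finset.sum_sub_distrib, ← Finset.sum_sub_distrib]
      apply Finset.sum_le_sum
      intro x _
      rw [← mul_sub, ← mul_sub]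
      exact mul_le_mul_of_nonneg_left (ih x) (N.b_nonneg v x)

lemma eFun_submod_perm {A B Ahat Bhat : Set V} {w : V}
    (hAB : A ⊆ B) (hhat : Ahat ⊆ Bhat) (hwB : w ∉ B ∪ Bhat) :
    ∀ (t : ℕ) (v : V),
      N.eFun B (insert w Bhat) t v - N.eFun B Bhat t v ≤
        N.eFun A (insert w Ahat) t v - N.eFun A Ahat t v := by
  have hwA : w ∉ A ∪ Ahat := fun h =>
    hwB (h.elim (fun h => Or.inl (hAB h)) fun h => Or.inr (hhat h))
  intro t
  induction t with
  | zero =>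
    intro v
    have hRHS : 0 ≤ N.eFun A (insert w Ahat) 0 v - N.eFun A Ahat 0 v := by
      have := N.eFun_mono (Set.Subset.refl A) (Set.subset_insert w Ahat) 0 v
      linarith
    by_cases hvw : v = w
    · subst hvw
      rw [N.eFun_zero_of_mem (Or.inr (Set.mem_insert _ _)),
        N.eFun_zero_of_notMem hwB,
        N.eFun_zero_of_mem (Or.inr (Set.mem_insert _ _)),
        N.eFun_zero_of_notMem hwA]
    · by_cases hb : v ∈ B ∪ Bhat
      · have hb' : v ∈ B ∪ insert w Bhat :=
          hb.elim Or.inl fun h => Or.inr (Set.mem_insert_of_mem _ h)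
        rw [N.eFun_zero_of_mem hb', N.eFun_zero_of_mem hb]
        linarith
      · have hb' : v ∉ B ∪ insert w Bhat := by
          rintro (h | h)
          · exact hb (Or.inl h)
          · rcases Set.mem_insert_iff.mp h with rfl | h
            · exact hvw rfl
            · exact hb (Or.inr h)
        rw [N.eFun_zero_of_notMem hb', N.eFun_zero_of_notMem hb]
        linarith
  | succ t ih =>
    intro v
    by_cases hvw : v = w
    · subst hvw
      rw [N.eFun_succ_of_mem (Set.mem_insert _ _), N.eFun_succ_of_mem (Set.mem_insert _ _)]
      have := N.eFun_mono hAB hhat (t+1) v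
      linarith
    · by_cases hB : v ∈ Bhat
      · rw [N.eFun_succ_of_mem (Set.mem_insert_of_mem _ hB), N.eFun_succ_of_mem hB, sub_self]
        have := N.eFun_mono (Set.Subset.refl A) (Set.subset_insert w Ahat) (t+1) v
        linarith
      · have hA : v ∉ Ahat := fun hh => hB (hhat hh)
        have hB' : v ∉ insert w Bhat := fun h => (Set.mem_insert_iff.mp h).elim hvw hB
        have hA' : v ∉ insert w Ahat := fun h => (Set.mem_insert_iff.mp h).elim hvw hA
        rw [N.eFun_succ_of_notMem hB', N.eFun_succ_of_notMem hB,
          N.eFun_succ_of_notMem hA', N.eFun_succ_of_notMem hA,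
          ← Finset.sum_sub_distrib, ← Finset.sum_sub_distrib]
        apply Finset.sum_le_sum
        intro x _
        rw [← mul_sub, ← mul_sub]
        exact mul_le_mul_of_nonneg_left (ih x) (N.b_nonneg v x)

/-- In an acyclic network the activation probabilities satisfy the deterministic
recursion `eFun`. -/
lemma EX_eq_eFun (hacyc : N.Acyclic) {A Ahat : Set V}
    (hA : N.d ∉ A) (hAhat : N.d ∉ Ahat) :
    ∀ (t : ℕ) (v : V), N.EX A Ahat t v = N.eFun A Ahat t v := by
  intro t
  induction t with
  | zero =>
    intro v
    by_cases h : v ∈ A ∪ Ahat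
    · rw [N.EX_zero_of_mem h, N.eFun_zero_of_mem h]
    · rw [N.EX_zero_of_notMem h, N.eFun_zero_of_notMem h]
  | succ t ih =>
    intro v
    by_cases hvd : v = N.d
    · subst hvd
      rw [N.EX_void hA hAhat, N.eFun_void hA hAhat]
    · by_cases hvA : v ∈ Ahat
      · rw [N.EX_succ_of_mem hvA, N.eFun_succ_of_mem hvA]
      · rw [N.EX_succ hacyc hvd hvA, N.eFun_succ_of_notMem hvA]
        exact Finset.sum_congr rfl fun x _ => by rw [ih x]

end InfoNetwork

end Aux


/-- in an acyclic network, for a non-void node `v` and a time `1 ≤ t ≤ T`,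
the function `(A, Ahat) ↦ E[X^t_v(A, Ahat)]` is submodular in each argument and monotone:
for `A ⊆ B ⊆ V \ {d}`, `Ahat ⊆ Bhat ⊆ V \ {d}` and `w ∈ (V \ {d}) \ (B ∪ Bhat)`,
(1) the marginal gain of adding `w` transiently at `(A, Ahat)` dominates that at `(B, Bhat)`;
(2) likewise for adding `w` permanently; and (3) `E[X^t_v(A, Ahat)] ≤ E[X^t_v(B, Bhat)]`. -/
theorem EX_submodular_monotone {V : Type*} [Fintype V] (N : InfoNetwork V)
    (hacyc : N.Acyclic) (T : ℕ) (t : ℕ) (ht1 : 1 ≤ t) (htT : t ≤ T)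
    (v : V) (hv : v ≠ N.d)
    (A B Ahat Bhat : Set V) (hAB : A ⊆ B) (hB : B ⊆ {x : V | x ≠ N.d})
    (hAhatBhat : Ahat ⊆ Bhat) (hBhat : Bhat ⊆ {x : V | x ≠ N.d})
    (w : V) (hw : w ≠ N.d) (hwB : w ∉ B ∪ Bhat) :
    (N.EX (insert w A) Ahat t v - N.EX A Ahat t v ≥
        N.EX (insert w B) Bhat t v - N.EX B Bhat t v) ∧
    (N.EX A (insert w Ahat) t v - N.EX A Ahat t v ≥
        N.EX B (insert w Bhat) t v - N.EX B Bhat t v) ∧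
    (N.EX A Ahat t v ≤ N.EX B Bhat t v) := by
  
  have hdB : N.d ∉ B := fun h => (hB h) rfl
  have hdA : N.d ∉ A := fun h => hdB (hAB h)
  have hdBhat : N.d ∉ Bhat := fun h => (hBhat h) rfl
  have hdAhat : N.d ∉ Ahat := fun h => hdBhat (hAhatBhat h)
  have hdiA : N.d ∉ insert w A := by
    intro h
    rcases Set.mem_insert_iff.mp h with h | h
    · exact hw h.symm
    · exact hdA h
  have hdiB : N.d ∉ insert w B := by
    intro h
    rcases Set.mem_insert_iff.mp h with h | h
    · exact hw h.symm
    · exact hdB h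
  have hdiAhat : N.d ∉ insert w Ahat := by
    intro h
    rcases Set.mem_insert_iff.mp h with h | h
    · exact hw h.symm
    · exact hdAhat h
  have hdiBhat : N.d ∉ insert w Bhat := by
    intro h
    rcases Set.mem_insert_iff.mp h with h | h
    · exact hw h.symm
    · exact hdBhat h
  refine ⟨?_, ?_, ?_⟩
  · rw [N.EX_eq_eFun hacyc hdiA hdAhat, N.EX_eq_eFun hacyc hdA hdAhat,
      N.EX_eq_eFun hacyc hdiB hdBhat, N.EX_eq_eFun hacyc hdB hdBhat]
    exact N.eFun_submod_trans hAB hAhatBhat hwB t v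
  · rw [N.EX_eq_eFun hacyc hdA hdiAhat, N.EX_eq_eFun hacyc hdA hdAhat,
      N.EX_eq_eFun hacyc hdB hdiBhat, N.EX_eq_eFun hacyc hdB hdBhat]
    exact N.eFun_submod_perm hAB hAhatBhat hwB t v
  · rw [N.EX_eq_eFun hacyc hdA hdAhat, N.EX_eq_eFun hacyc hdB hdBhat]
    exact N.eFun_mono hAB hAhatBhat t v
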